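/- arXiv:1610.02545 — 3 statements merged into one kernel-verified Lean document; each statement's English description precedes it below -/
import Mathlib

section
/- Let m ∈ F_2[t] be odd and N a positive integer. The map Φ_m sending a residue class f mod t^N in F_2[t]/(t^N) to the first N terms (p_0, ..., p_{N-1}) of the parity sequence of f under the mx+1 map T is well defined and is a bijection from F_2[t]/(t^N) onto {0,1}^N. -/
/-!
Since `m(0) = 1`, one step of the map satisfies `t · T(f) = f` or `t · T(f) = m f + 1`, so for
`f(0) = g(0)` we get `t · (T f - T g) = u · (f - g)` with `u ∈ {1, m}` coprime to `t`.
Hence `t^(n+1) ∣ f - g` iff `f(0) = g(0)` and `t^n ∣ T f - T g`, and by induction `t^N ∣ f - g`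
iff `f` and `g` have the same first `N` parities. So the parity map is well defined and injective on
`𝔽₂[t]/(t^N)`, and it is bijective because both sides have `2^N` elements.
-/

open Polynomial

/-- The `mx+1` map on `𝔽₂[t]`. -/
noncomputable def Tmap (m f : Polynomial (ZMod 2)) : Polynomial (ZMod 2) :=
  if f.eval 0 = 0 then f /ₘ X else (m * f + 1) /ₘ X

lemma X_mul_divByMonic_X {R : Type*} [CommRing R] (f : R[X]) :
    X * (f /ₘ X) = f - C (f.eval 0) := by
  rw [← modByMonic_X, eq_sub_iff_add_eq, add_comm, modByMonic_add_div f X]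

lemma eval_zero_eq_of_X_dvd_sub {R : Type*} [CommRing R] {f g : R[X]} (h : X ∣ f - g) :
    f.eval 0 = g.eval 0 := by
  rwa [X_dvd_iff, coeff_zero_eq_eval_zero, eval_sub, sub_eq_zero] at h

lemma isCoprime_X_pow_of_eval_zero_ne_zero {K : Type*} [Field K] {u : K[X]} (hu : u.eval 0 ≠ 0)
    (n : ℕ) : IsCoprime (X ^ n) u :=
  (prime_X.coprime_iff_not_dvd.2 (by rwa [X_dvd_iff, coeff_zero_eq_eval_zero])).pow_left

section Tmap

variable {m : Polynomial (ZMod 2)}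

lemma X_mul_Tmap (hm : m.eval 0 = 1) (f : Polynomial (ZMod 2)) :
    X * Tmap m f = if f.eval 0 = 0 then f else m * f + 1 := by
  unfold Tmap
  split_ifs with h
  · rw [X_mul_divByMonic_X, h, map_zero, sub_zero]
  · have h1 : f.eval 0 = 1 := by
      revert h; generalize f.eval 0 = x; revert x; decide
    have h2 : (m * f + 1).eval 0 = 0 := by
      rw [eval_add, eval_mul, hm, h1, eval_one]; decide
    rw [X_mul_divByMonic_X, h2, map_zero, sub_zero]

lemma X_mul_Tmap_sub_Tmap (hm : m.eval 0 = 1) {f g : Polynomial (ZMod 2)}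
    (h : f.eval 0 = g.eval 0) :
    X * (Tmap m f - Tmap m g) = (if f.eval 0 = 0 then 1 else m) * (f - g) := by
  rw [mul_sub, X_mul_Tmap hm, X_mul_Tmap hm, ← h]
  split_ifs <;> ring

lemma X_pow_succ_dvd_sub_iff (hm : m.eval 0 = 1) {f g : Polynomial (ZMod 2)} {n : ℕ} :
    X ^ (n + 1) ∣ f - g ↔ f.eval 0 = g.eval 0 ∧ X ^ n ∣ Tmap m f - Tmap m g := by
  by_cases h : f.eval 0 = g.eval 0
  · have hu : (if f.eval 0 = 0 then 1 else m).eval 0 ≠ 0 := by split_ifs <;> simp [hm]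
    rw [and_iff_right h, ← mul_dvd_mul_iff_left (b := X ^ n) X_ne_zero, ← pow_succ',
      X_mul_Tmap_sub_Tmap hm h]
    exact ⟨(dvd_mul_of_dvd_right · _),
      (isCoprime_X_pow_of_eval_zero_ne_zero hu (n + 1)).dvd_of_dvd_mul_left⟩
  · refine iff_of_false (fun hd => h (eval_zero_eq_of_X_dvd_sub ?_)) (fun h' => h h'.1)
    exact (dvd_pow_self X n.succ_ne_zero).trans hd

lemma X_pow_dvd_sub_iff_parities_eq (hm : m.eval 0 = 1) {f g : Polynomial (ZMod 2)} {n : ℕ} :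
    X ^ n ∣ f - g ↔ ∀ k < n, ((Tmap m)^[k] f).eval 0 = ((Tmap m)^[k] g).eval 0 := by
  induction n generalizing f g with
  | zero => simp
  | succ n ih =>
    rw [X_pow_succ_dvd_sub_iff hm, ih, Nat.forall_lt_succ_left]
    rfl

end Tmap

lemma natCard_quotient_span_X_pow (K : Type*) [Field K] (n : ℕ) :
    Nat.card (K[X] ⧸ Ideal.span {(X : K[X]) ^ n}) = Nat.card K ^ n := by
  have : Module.Finite K (K[X] ⧸ Ideal.span {(X : K[X]) ^ n}) :=
    (AdjoinRoot.powerBasis (monic_X_pow n).ne_zero).finite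
  rw [Module.natCard_eq_pow_finrank (K := K), finrank_quotient_span_eq_natDegree,
    natDegree_X_pow]

theorem stmt_8_general (m : Polynomial (ZMod 2)) (hm : m.eval 0 = 1) (N : ℕ) :
    ∃ Φ : (Polynomial (ZMod 2) ⧸ Ideal.span {(X : Polynomial (ZMod 2)) ^ N}) →
        (Fin N → ZMod 2),
      (∀ f : Polynomial (ZMod 2),
        Φ (Ideal.Quotient.mk _ f) = fun k : Fin N => ((Tmap m)^[(k : ℕ)] f).eval 0) ∧
      Function.Bijective Φ := by
  let parities (f : Polynomial (ZMod 2)) (k : Fin N) : ZMod 2 := ((Tmap m)^[(k : ℕ)] f).eval 0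
  have parities_eq_iff (f g : Polynomial (ZMod 2)) :
      parities f = parities g ↔ f - g ∈ Ideal.span {(X : Polynomial (ZMod 2)) ^ N} := by
    rw [Ideal.mem_span_singleton, X_pow_dvd_sub_iff_parities_eq hm, funext_iff, Fin.forall_iff]
  let Φ : Polynomial (ZMod 2) ⧸ Ideal.span {(X : Polynomial (ZMod 2)) ^ N} → Fin N → ZMod 2 :=
    Quotient.lift parities fun f g h =>
      (parities_eq_iff f g).2 (Submodule.quotientRel_def _ |>.1 h)
  have hΦ : Function.Injective Φ := by
    rintro ⟨f⟩ ⟨g⟩ h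
    exact Ideal.Quotient.eq.2 ((parities_eq_iff f g).1 h)
  refine ⟨Φ, fun _ => rfl, hΦ.bijective_of_nat_card_le ?_⟩
  rw [natCard_quotient_span_X_pow, Nat.card_fun, Nat.card_fin]

/-- For odd `m` and `N ≥ 1`, the map sending a residue class `f mod t^N` to the first `N`
terms of the parity sequence of `f` is well defined and is a bijection
`𝔽₂[t]/(t^N) → {0,1}^N`. -/
theorem stmt_8 (m : Polynomial (ZMod 2)) (hm : m.eval 0 = 1) (N : ℕ) (hN : 1 ≤ N) :
    ∃ Φ : (Polynomial (ZMod 2) ⧸ Ideal.span {(X : Polynomial (ZMod 2)) ^ N}) →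
        (Fin N → ZMod 2),
      (∀ f : Polynomial (ZMod 2),
        Φ (Ideal.Quotient.mk _ f) = fun k : Fin N => ((Tmap m)^[(k : ℕ)] f).eval 0) ∧
      Function.Bijective Φ :=
  stmt_8_general m hm N
end

section
/- Let m ∈ F_2[t] be odd with deg m = d ≥ 2. For every positive integer N there exists f ∈ F_2[t] of degree < N such that deg T^k(f) ≥ deg f for all 0 < k ≤ N; in particular, the stopping time of f exceeds N. Specifically, the unique f of degree < N whose first N parity terms are all 1 satisfies deg T^N(f) = deg f + N(d - 1). -/
open Polynomial

lemma zmod2_cases : ∀ x : ZMod 2, x = 0 ∨ x = 1 := by decide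

lemma Tmap_odd (m f : Polynomial (ZMod 2)) (h : f.eval 0 = 1) :
    Tmap m f = (m * f + 1) /ₘ X := by
  rw [Tmap, if_neg (by rw [h]; exact one_ne_zero)]

lemma X_dvd_of_eval0 (p : Polynomial (ZMod 2)) (h : p.eval 0 = 0) : X ∣ p := by
  rw [X_dvd_iff, coeff_zero_eq_eval_zero]; exact h

/-- One step of the shift lemma. -/
lemma Tmap_add_X_mul (m f w : Polynomial (ZMod 2)) (hm : m.eval 0 = 1)
    (hf : f.eval 0 = 1) :
    Tmap m (f + X * w) = Tmap m f + m * w := by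
  have hfw : (f + X * w).eval 0 = 1 := by simp [hf]
  rw [Tmap_odd m _ hfw, Tmap_odd m f hf]
  have h0 : (m * f + 1).eval 0 = 0 := by
    simp only [eval_add, eval_mul, eval_one, hm, hf]; decide
  obtain ⟨u, hu⟩ := X_dvd_of_eval0 _ h0
  have key : m * (f + X * w) + 1 = X * (u + m * w) := by
    have : m * (f + X * w) + 1 = (m * f + 1) + X * (m * w) := by ring
    rw [this, hu]; ring
  rw [key, hu, mul_divByMonic_cancel_left _ monic_X, mul_divByMonic_cancel_left _ monic_X]

/-- The shift lemma: adding `X^n * v` doesn't affect the first `n` steps. -/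
lemma Tmap_shift (m : Polynomial (ZMod 2)) (hm : m.eval 0 = 1) :
    ∀ (n : ℕ) (f v : Polynomial (ZMod 2)),
      (∀ k < n, ((Tmap m)^[k] f).eval 0 = 1) →
      (Tmap m)^[n] (f + X ^ n * v) = (Tmap m)^[n] f + m ^ n * v := by
  intro n
  induction n with
  | zero => intro f v _; simp
  | succ n ih =>
    intro f v hpar
    have h0 : f.eval 0 = 1 := by simpa using hpar 0 (Nat.succ_pos n)
    have hstep : Tmap m (f + X ^ (n + 1) * v) = Tmap m f + X ^ n * (m * v) := by
      have h : f + X ^ (n + 1) * v = f + X * (X ^ n * v) := by ring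
      rw [h, Tmap_add_X_mul m f _ hm h0]; ring
    rw [Function.iterate_succ_apply, hstep,
      ih (Tmap m f) (m * v) (fun k hk => by
        simpa [Function.iterate_succ_apply] using hpar (k + 1) (Nat.succ_lt_succ hk)),
      ← Function.iterate_succ_apply]
    ring

/-- Degree growth for one odd step. -/
lemma Tmap_natDegree (m f : Polynomial (ZMod 2)) (hm : m.eval 0 = 1)
    (hd2 : 2 ≤ m.natDegree) (hf : f.eval 0 = 1) :
    (Tmap m f).natDegree = f.natDegree + (m.natDegree - 1) := by
  have hm0 : m ≠ 0 := fun h => by simp [h] at hm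
  have hf0 : f ≠ 0 := fun h => by simp [h] at hf
  have hmul : (m * f).natDegree = m.natDegree + f.natDegree := natDegree_mul hm0 hf0
  have h1 : (m * f + 1).natDegree = m.natDegree + f.natDegree := by
    have h : (1 : Polynomial (ZMod 2)) = C 1 := by simp
    rw [h, natDegree_add_C, hmul]
  rw [Tmap_odd m f hf, natDegree_divByMonic _ monic_X, h1, natDegree_X]
  omega

/-- Degrees along an all-odd trajectory. -/
lemma Tmap_iter_natDegree (m f : Polynomial (ZMod 2)) (hm : m.eval 0 = 1)
    (hd2 : 2 ≤ m.natDegree) (N : ℕ) (hpar : ∀ k < N, ((Tmap m)^[k] f).eval 0 = 1) :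
    ∀ k ≤ N, ((Tmap m)^[k] f).natDegree = f.natDegree + k * (m.natDegree - 1) := by
  intro k
  induction k with
  | zero => intro _; simp
  | succ k ih =>
    intro hk
    rw [Function.iterate_succ_apply',
      Tmap_natDegree m _ hm hd2 (hpar k (lt_of_lt_of_le (Nat.lt_succ_self k) hk)),
      ih (le_of_lt (lt_of_lt_of_le (Nat.lt_succ_self k) hk))]
    ring

/-- Existence of an all-ones seed of degree < N. -/
lemma exists_all_ones (m : Polynomial (ZMod 2)) (hm : m.eval 0 = 1) :
    ∀ N, 1 ≤ N → ∃ f : Polynomial (ZMod 2),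
      f.natDegree < N ∧ (∀ k < N, ((Tmap m)^[k] f).eval 0 = 1) := by
  intro N
  induction N with
  | zero => intro h; omega
  | succ N ih =>
    intro _
    by_cases h1 : N = 0
    · subst h1
      refine ⟨1, by norm_num, fun k hk => ?_⟩
      interval_cases k
      simp
    · obtain ⟨f, hdeg, hpar⟩ := ih (by omega)
      by_cases hlast : ((Tmap m)^[N] f).eval 0 = 1
      · refine ⟨f, by omega, fun k hk => ?_⟩
        rcases Nat.lt_succ_iff_lt_or_eq.mp hk with h | h
        · exact hpar k h
        · rw [h]; exact hlast
      · have hlast0 : ((Tmap m)^[N] f).eval 0 = 0 := by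
          rcases zmod2_cases (((Tmap m)^[N] f).eval 0) with h | h
          · exact h
          · exact absurd h hlast
        refine ⟨f + X ^ N * 1, ?_, fun k hk => ?_⟩
        · have hXN : (X ^ N * 1 : Polynomial (ZMod 2)).natDegree = N := by simp
          calc (f + X ^ N * 1).natDegree
              ≤ max f.natDegree (X ^ N * 1 : Polynomial (ZMod 2)).natDegree :=
                natDegree_add_le _ _
            _ < N + 1 := by rw [hXN]; omega
        · rcases Nat.lt_succ_iff_lt_or_eq.mp hk with h | h
          · have hsplit : f + X ^ N * 1 = f + X ^ k * X ^ (N - k) := by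
              rw [mul_one, ← pow_add, Nat.add_sub_cancel' h.le]
            rw [hsplit, Tmap_shift m hm k f _ (fun j hj => hpar j (lt_trans hj h))]
            have hx : ((m ^ k * X ^ (N - k) : Polynomial (ZMod 2))).eval 0 = 0 := by
              have hpos : N - k ≠ 0 := by omega
              simp [zero_pow hpos]
            simp [hx, hpar k h]
          · subst h
            rw [Tmap_shift m hm k f 1 hpar]
            simp only [eval_add, eval_mul, eval_pow, eval_one, hlast0, hm, mul_one, one_pow,
              zero_add]

/-- Uniqueness of the all-ones seed. -/
lemma unique_all_ones (m : Polynomial (ZMod 2)) (hm : m.eval 0 = 1) (N : ℕ)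
    (f f' : Polynomial (ZMod 2)) (hdeg : f.natDegree < N) (hdeg' : f'.natDegree < N)
    (hpar : ∀ k < N, ((Tmap m)^[k] f).eval 0 = 1)
    (hpar' : ∀ k < N, ((Tmap m)^[k] f').eval 0 = 1) : f' = f := by
  by_contra hne
  set g : Polynomial (ZMod 2) := f' - f with hg
  have hg0 : g ≠ 0 := sub_ne_zero.mpr hne
  set n := g.natTrailingDegree with hn
  have hdvd : X ^ n ∣ g := by
    rw [X_pow_dvd_iff]
    exact fun i hi => coeff_eq_zero_of_lt_natTrailingDegree hi
  obtain ⟨v, hv⟩ := hdvd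
  have hvc : v.coeff 0 ≠ 0 := by
    intro h
    have hgn : g.coeff n = 0 := by
      have := coeff_X_pow_mul v n 0
      rw [hv]; simpa [h] using this
    exact (trailingCoeff_nonzero_iff_nonzero.mpr hg0) (by rwa [trailingCoeff])
  have hv1 : v.eval 0 = 1 := by
    rw [← coeff_zero_eq_eval_zero]
    rcases zmod2_cases (v.coeff 0) with h | h
    · exact absurd h hvc
    · exact h
  have hnN : n < N := by
    have h1 : n ≤ g.natDegree := natTrailingDegree_le_natDegree g
    have h2 : g.natDegree ≤ max f'.natDegree f.natDegree := natDegree_sub_le f' f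
    omega
  have hf' : f' = f + X ^ n * v := by
    have : f' - f = X ^ n * v := by rw [← hv]
    linear_combination this
  have := Tmap_shift m hm n f v (fun k hk => hpar k (lt_trans hk hnN))
  rw [← hf'] at this
  have heval := congrArg (Polynomial.eval 0) this
  rw [hpar' n hnN] at heval
  simp only [eval_add, eval_mul, eval_pow, hm, hv1, one_pow, mul_one,
    hpar n hnN] at heval
  exact absurd heval (by decide)

/-- For odd `m` of degree `d ≥ 2` and any `N ≥ 1`, the unique `f` of degree `< N` whose
first `N` parity terms are all `1` satisfies `deg T^k(f) ≥ deg f` for `0 < k ≤ N`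
(so its stopping time exceeds `N`) and `deg T^N(f) = deg f + N(d-1)`. -/
theorem stmt_10 (m : Polynomial (ZMod 2)) (hm : m.eval 0 = 1) (d : ℕ)
    (hd : m.natDegree = d) (hd2 : 2 ≤ d) (N : ℕ) (hN : 1 ≤ N) :
    ∃ f : Polynomial (ZMod 2),
      f.natDegree < N ∧
      (∀ k < N, ((Tmap m)^[k] f).eval 0 = 1) ∧
      (∀ f' : Polynomial (ZMod 2), f'.natDegree < N →
        (∀ k < N, ((Tmap m)^[k] f').eval 0 = 1) → f' = f) ∧
      (∀ k, 0 < k → k ≤ N → f.natDegree ≤ ((Tmap m)^[k] f).natDegree) ∧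
      ((Tmap m)^[N] f).natDegree = f.natDegree + N * (d - 1) := by
  subst hd
  obtain ⟨f, hdeg, hpar⟩ := exists_all_ones m hm N hN
  have hdegs := Tmap_iter_natDegree m f hm hd2 N hpar
  refine ⟨f, hdeg, hpar, fun f' hd' hp' => unique_all_ones m hm N f f' hdeg hd' hpar hp',
    fun k hk0 hkN => ?_, hdegs N le_rfl⟩
  rw [hdegs k hkN]
  omega
end

section
/- Let R = F_2[x,t]/(x^2 + tx + r(t)) and define deg f = max(deg f_0, deg f_1) for f = f_0 + x f_1 (with deg 0 = -∞). Let m = m_0 + x·m_1 and f = f_0 + x·f_1 be nonzero elements of R with deg m_1 - deg m_0 < -1 (i.e., deg m_1 ≤ deg m_0 - 2, including m_1 = 0). Then deg(m·f) = deg m + deg f. -/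
open Polynomial

/-!
Write `A = m₀f₀ + m₁f₁r` and `B = m₀f₁ + m₁f₀ + t f₁m₁` for the two components of `m·f`.
Since `deg m₁ + 2 ≤ deg m₀` and `deg r ≤ 2`, every term has degree at most
`deg m₀ + deg f`. If `deg f₁ < deg f₀`, the term `m₀f₀` strictly dominates `A`; otherwise
`m₀f₁` strictly dominates `B`. Either way one component attains `deg m₀ + deg f`.
-/

lemma WithBot.add_one_lt_of_add_two_le {a b : WithBot ℕ} (h : a + 2 ≤ b) (hb : b ≠ ⊥) :
    a + 1 < b := by
  rcases eq_or_ne a ⊥ with rfl | ha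
  · exact Ne.bot_lt hb
  · exact (WithBot.add_lt_add_left ha (by decide : (1 : WithBot ℕ) < 2)).trans_le h

namespace Polynomial

section

variable {R : Type*} [Semiring R] {r m0 m1 f0 f1 : R[X]}

lemma degree_mul_mul_le_add_two (hr : r.degree ≤ 2) :
    (m1 * f1 * r).degree ≤ (m1.degree + 2) + f1.degree :=
  calc (m1 * f1 * r).degree ≤ m1.degree + f1.degree + 2 :=
        (degree_mul_le _ _).trans (add_le_add (degree_mul_le _ _) hr)
    _ = (m1.degree + 2) + f1.degree := add_right_comm _ _ _

lemma degree_X_mul_mul_le_add_one : (X * f1 * m1).degree ≤ (m1.degree + 1) + f1.degree :=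
  calc (X * f1 * m1).degree ≤ 1 + f1.degree + m1.degree :=
        (degree_mul_le _ _).trans
          (by gcongr; exact (degree_mul_le _ _).trans (by gcongr; exact degree_X_le))
    _ = (m1.degree + 1) + f1.degree := by ac_rfl

lemma degree_const_part_le (hr : r.degree ≤ 2) (hm : m1.degree + 2 ≤ m0.degree) :
    (m0 * f0 + m1 * f1 * r).degree ≤ m0.degree + max f0.degree f1.degree := by
  refine (degree_add_le _ _).trans (max_le ?_ ?_)
  · exact (degree_mul_le _ _).trans (by gcongr; exact le_max_left _ _)
  · exact (degree_mul_mul_le_add_two hr).trans (add_le_add hm (le_max_right _ _))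

lemma degree_x_part_le (hm : m1.degree + 2 ≤ m0.degree) :
    (m0 * f1 + m1 * f0 + X * f1 * m1).degree ≤ m0.degree + max f0.degree f1.degree := by
  refine (degree_add_le _ _).trans (max_le ((degree_add_le _ _).trans (max_le ?_ ?_)) ?_)
  · exact (degree_mul_le _ _).trans (by gcongr; exact le_max_right _ _)
  · exact (degree_mul_le _ _).trans
      (add_le_add (le_trans (le_add_of_nonneg_right (by decide)) hm) (le_max_left _ _))
  · exact degree_X_mul_mul_le_add_one.trans
      (add_le_add (le_trans (by gcongr; decide) hm) (le_max_right _ _))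

variable [NoZeroDivisors R]

lemma degree_const_part_eq (hr : r.degree ≤ 2) (hm : m1.degree + 2 ≤ m0.degree)
    (hm0 : m0 ≠ 0) (hf : f1.degree < f0.degree) :
    (m0 * f0 + m1 * f1 * r).degree = m0.degree + f0.degree := by
  rw [← degree_mul]
  refine degree_add_eq_left_of_degree_lt ?_
  calc (m1 * f1 * r).degree ≤ (m1.degree + 2) + f1.degree := degree_mul_mul_le_add_two hr
    _ ≤ m0.degree + f1.degree := by gcongr
    _ < m0.degree + f0.degree := WithBot.add_lt_add_left (degree_ne_bot.mpr hm0) hf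
    _ = (m0 * f0).degree := degree_mul.symm

lemma degree_x_part_eq (hm : m1.degree + 2 ≤ m0.degree) (hm0 : m0 ≠ 0) (hf1 : f1 ≠ 0)
    (hf : f0.degree ≤ f1.degree) :
    (m0 * f1 + m1 * f0 + X * f1 * m1).degree = m0.degree + f1.degree := by
  have hm1 : m1.degree + 1 < m0.degree :=
    WithBot.add_one_lt_of_add_two_le hm (degree_ne_bot.mpr hm0)
  have hf1' : f1.degree ≠ ⊥ := degree_ne_bot.mpr hf1
  have hsub : (m0 * f1 + m1 * f0).degree = m0.degree + f1.degree := by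
    rw [← degree_mul]
    refine degree_add_eq_left_of_degree_lt ?_
    calc (m1 * f0).degree = m1.degree + f0.degree := degree_mul
      _ ≤ m1.degree + f1.degree := by gcongr
      _ < m0.degree + f1.degree :=
          WithBot.add_lt_add_right hf1' ((le_add_of_nonneg_right (by decide)).trans_lt hm1)
      _ = (m0 * f1).degree := degree_mul.symm
  rw [← hsub]
  refine degree_add_eq_left_of_degree_lt ?_
  calc (X * f1 * m1).degree ≤ (m1.degree + 1) + f1.degree := degree_X_mul_mul_le_add_one
    _ < m0.degree + f1.degree := WithBot.add_lt_add_right hf1' hm1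
    _ = (m0 * f1 + m1 * f0).degree := hsub.symm

end

end Polynomial

theorem stmt_14_general (r : Polynomial (ZMod 2)) (hr : r.degree = 2)
    (m0 m1 f0 f1 : Polynomial (ZMod 2))
    (hcond : m1.degree + 2 ≤ m0.degree) :
    max (m0 * f0 + m1 * f1 * r).degree
        (m0 * f1 + m1 * f0 + Polynomial.X * f1 * m1).degree =
      max m0.degree m1.degree + max f0.degree f1.degree := by
  rw [max_eq_left (le_trans (le_add_of_nonneg_right (by decide)) hcond)]
  refine le_antisymm (max_le (degree_const_part_le hr.le hcond) (degree_x_part_le hcond)) ?_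
  rcases eq_or_ne m0 0 with rfl | hm0
  · simp
  rcases lt_or_ge f1.degree f0.degree with hf | hf
  · rw [max_eq_left hf.le, ← degree_const_part_eq hr.le hcond hm0 hf]
    exact le_max_left _ _
  rcases eq_or_ne f1 0 with rfl | hf1
  · rw [degree_zero, le_bot_iff] at hf
    simp [hf]
  rw [max_eq_right hf, ← degree_x_part_eq hcond hm0 hf1 hf]
  exact le_max_right _ _

/-- In `R = 𝔽₂[x,t]/(x² + tx + r(t))` with `deg r = 2`, writing elements uniquely as
`f₀ + x·f₁` with degree `max (deg f₀) (deg f₁)`, and products via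
`m·f = [m₀f₀ + m₁f₁r] + x·[m₀f₁ + m₁f₀ + t f₁ m₁]`: if `deg m₁ - deg m₀ < -1` and
`m, f ≠ 0`, then `deg (m·f) = deg m + deg f`. -/
theorem stmt_14 (r : Polynomial (ZMod 2)) (hr : r.degree = 2)
    (m0 m1 f0 f1 : Polynomial (ZMod 2))
    (hm : ¬(m0 = 0 ∧ m1 = 0)) (hf : ¬(f0 = 0 ∧ f1 = 0))
    (hcond : m1.degree + 2 ≤ m0.degree) :
    max (m0 * f0 + m1 * f1 * r).degree
        (m0 * f1 + m1 * f0 + Polynomial.X * f1 * m1).degree =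
      max m0.degree m1.degree + max f0.degree f1.degree :=
  stmt_14_general r hr m0 m1 f0 f1 hcond
end
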